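/- Let α, β > 0 and let X = (X_t)_{t ≥ 0} be a non-trivial stochastically continuous α-IDT process that is strictly β-stable. Then X is (α/β)-selfsimilar. -/

import Mathlib

open MeasureTheory ProbabilityTheory

/-- Two processes (indexed by nonnegative real times) have the same finite-dimensional
distributions: for every finite family of nonnegative times, the laws of the corresponding
finite-dimensional marginals coincide. -/
def HasSameFDD {Ω Ω' : Type*} [MeasurableSpace Ω] [MeasurableSpace Ω']
    (P : Measure Ω) (P' : Measure Ω') (X : ℝ → Ω → ℝ) (Y : ℝ → Ω' → ℝ) : Prop :=
  ∀ (m : ℕ) (t : Fin m → ℝ), (∀ i, 0 ≤ t i) →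
    Measure.map (fun ω i => X (t i) ω) P = Measure.map (fun ω i => Y (t i) ω) P'

/-- A process `X` is `α`-IDT if for every positive integer `n`, the time-rescaled process
`(X_{n^{1/α} t})_{t ≥ 0}` has the same finite-dimensional distributions as the sum of `n`
independent copies of `X` (realized canonically on the `n`-fold product space). -/
def IsAlphaIDT {Ω : Type*} [MeasurableSpace Ω] (P : Measure Ω) (α : ℝ)
    (X : ℝ → Ω → ℝ) : Prop :=
  ∀ n : ℕ, 0 < n →
    HasSameFDD P (Measure.pi fun _ : Fin n => P)
      (fun t ω => X ((n : ℝ) ^ (1 / α) * t) ω)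
      (fun t ω => ∑ j, X t (ω j))
/-- A process is stochastically continuous (continuous in probability) on `[0,∞)`. -/
def StochasticallyContinuous {Ω : Type*} [MeasurableSpace Ω] (P : Measure Ω)
    (X : ℝ → Ω → ℝ) : Prop :=
  ∀ s : ℝ, 0 ≤ s → TendstoInMeasure P X (nhdsWithin s (Set.Ici 0)) (X s)
/-- A process is `H`-selfsimilar: for every `a > 0`, `(X_{at})_{t ≥ 0}` has the same
finite-dimensional distributions as `(a^H X_t)_{t ≥ 0}`. -/
def IsSelfSimilar {Ω : Type*} [MeasurableSpace Ω] (P : Measure Ω) (H : ℝ)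
    (X : ℝ → Ω → ℝ) : Prop :=
  ∀ a : ℝ, 0 < a → HasSameFDD P P (fun t ω => X (a * t) ω) (fun t ω => a ^ H * X t ω)

/-- A process is strictly `β`-stable: for every positive integer `n`, the sum of `n`
independent copies of `X` (realized canonically on the `n`-fold product space) has the same
finite-dimensional distributions as `(n^{1/β} X_t)_{t ≥ 0}`. -/
def IsStrictlyStable {Ω : Type*} [MeasurableSpace Ω] (P : Measure Ω) (β : ℝ)
    (X : ℝ → Ω → ℝ) : Prop :=
  ∀ n : ℕ, 0 < n →
    HasSameFDD (Measure.pi fun _ : Fin n => P) P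
      (fun t ω => ∑ j, X t (ω j))
      (fun t ω => (n : ℝ) ^ (1 / β) * X t ω)

/-- A process is non-trivial if at some nonnegative time it is not almost surely constant. -/
def IsNonTrivialProcess {Ω : Type*} [MeasurableSpace Ω] (P : Measure Ω)
    (X : ℝ → Ω → ℝ) : Prop :=
  ∃ t : ℝ, 0 ≤ t ∧ ∀ c : ℝ, ¬ (X t =ᵐ[P] fun _ => c)

/-! Combining the IDT and stability relations shows that `X_{n^{1/α} t}` and `n^{1/β} X_t` have
the same finite-dimensional distributions for every positive integer `n`. The pairs `(a, b)` for
which `X_{a t}` and `b X_t` have the same finite-dimensional distributions are closed under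
products and inverses, which gives all pairs `(q^{1/α}, q^{1/β})` with `q > 0` rational. By
stochastic continuity they are also closed under limits, hence contain `(x^{1/α}, x^{1/β})` for
every real `x > 0`; taking `x = a^α` yields `(a, a^{α/β})`. -/

open Filter Topology

theorem MeasureTheory.tendstoInMeasure_pi {Ω ι : Type*} [MeasurableSpace Ω] [Fintype ι]
    {E : ι → Type*} [∀ i, PseudoEMetricSpace (E i)] {κ : Type*} {l : Filter κ} {P : Measure Ω}
    {F : κ → Ω → ∀ i, E i} {G : Ω → ∀ i, E i}
    (h : ∀ i, TendstoInMeasure P (fun k ω => F k ω i) l (fun ω => G ω i)) :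
    TendstoInMeasure P F l G := by
  intro ε hε
  have hsub : ∀ k, {ω | ε ≤ edist (F k ω) (G ω)} ⊆ ⋃ i, {ω | ε ≤ edist (F k ω i) (G ω i)} := by
    intro k ω hω
    by_contra hc
    simp only [Set.mem_iUnion, Set.mem_ofPred_eq, not_exists, not_le] at hc
    rw [Set.mem_ofPred_eq, edist_pi_def] at hω
    exact hω.not_gt ((Finset.sup_lt_iff hε).2 fun i _ => hc i)
  have hsum : Tendsto (fun k => ∑ i, P {ω | ε ≤ edist (F k ω i) (G ω i)}) l (𝓝 0) := by
    simpa using tendsto_finsetSum Finset.univ fun i _ => h i ε hε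
  exact tendsto_of_tendsto_of_tendsto_of_le_of_le tendsto_const_nhds hsum (fun _ => zero_le)
    fun k => (measure_mono (hsub k)).trans (measure_iUnion_fintype_le _ _)

theorem MeasureTheory.map_eq_map_of_tendstoInMeasure {Ω E ι : Type*} [MeasurableSpace Ω]
    {P : Measure Ω} [IsProbabilityMeasure P] [PseudoEMetricSpace E] [MeasurableSpace E]
    [BorelSpace E] {l : Filter ι} [l.IsCountablyGenerated] [l.NeBot]
    {F G : ι → Ω → E} {F' G' : Ω → E}
    (hF : ∀ k, AEMeasurable (F k) P) (hG : ∀ k, AEMeasurable (G k) P)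
    (hFF' : TendstoInMeasure P F l F') (hGG' : TendstoInMeasure P G l G')
    (hlaw : ∀ k, P.map (F k) = P.map (G k)) :
    P.map F' = P.map G' := by
  have hFG : TendstoInDistribution F l G' (fun _ => P) P :=
    ⟨hF, hGG'.aemeasurable hG, (hGG'.tendstoInDistribution hG).tendsto.congr fun k =>
      Subtype.ext (hlaw k).symm⟩
  exact tendstoInDistribution_unique F (hFF'.tendstoInDistribution hF) hFG

namespace HasSameFDD

variable {Ω Ω' Ω'' : Type*} [MeasurableSpace Ω] [MeasurableSpace Ω'] [MeasurableSpace Ω'']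
  {P : Measure Ω} {P' : Measure Ω'} {P'' : Measure Ω''}
  {X : ℝ → Ω → ℝ} {Y : ℝ → Ω' → ℝ} {Z : ℝ → Ω'' → ℝ}

theorem symm (h : HasSameFDD P P' X Y) : HasSameFDD P' P Y X :=
  fun m t ht => (h m t ht).symm

theorem trans (h₁ : HasSameFDD P P' X Y) (h₂ : HasSameFDD P' P'' Y Z) :
    HasSameFDD P P'' X Z :=
  fun m t ht => (h₁ m t ht).trans (h₂ m t ht)

theorem comp_mul_time (h : HasSameFDD P P' X Y) {c : ℝ} (hc : 0 ≤ c) :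
    HasSameFDD P P' (fun t => X (c * t)) (fun t => Y (c * t)) :=
  fun m t ht => h m (fun i => c * t i) fun i => mul_nonneg hc (ht i)

theorem const_mul (h : HasSameFDD P P' X Y) (hX : ∀ t, Measurable (X t))
    (hY : ∀ t, Measurable (Y t)) (c : ℝ) :
    HasSameFDD P P' (fun t ω => c * X t ω) (fun t ω => c * Y t ω) := by
  intro m t ht
  have hscale : Measurable fun v : Fin m → ℝ => fun i => c * v i := by fun_prop
  have hmap_X := Measure.map_map (μ := P) hscale (measurable_pi_lambda _ fun i => hX (t i))
  have hmap_Y := Measure.map_map (μ := P') hscale (measurable_pi_lambda _ fun i => hY (t i))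
  simp only [Function.comp_def] at hmap_X hmap_Y
  rw [← hmap_X, ← hmap_Y, h m t ht]

end HasSameFDD

def IsScalingPair {Ω : Type*} [MeasurableSpace Ω] (P : Measure Ω) (X : ℝ → Ω → ℝ)
    (a b : ℝ) : Prop :=
  HasSameFDD P P (fun t ω => X (a * t) ω) (fun t ω => b * X t ω)

namespace IsScalingPair

variable {Ω : Type*} [MeasurableSpace Ω] {P : Measure Ω} {X : ℝ → Ω → ℝ} {a b c d : ℝ}

theorem mul (hX : ∀ t, Measurable (X t)) (h₁ : IsScalingPair P X a b)
    (h₂ : IsScalingPair P X c d) (hc : 0 ≤ c) : IsScalingPair P X (a * c) (b * d) := by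
  intro m t ht
  have h := ((h₁.comp_mul_time hc).trans
    (h₂.const_mul (fun _ => hX _) (fun _ => (hX _).const_mul _) b)) m t ht
  simpa only [mul_assoc] using h

theorem inv (hX : ∀ t, Measurable (X t)) (h : IsScalingPair P X a b) (ha : 0 < a)
    (hb : b ≠ 0) : IsScalingPair P X a⁻¹ b⁻¹ := by
  intro m t ht
  have h' := ((h.comp_mul_time (inv_nonneg.2 ha.le)).const_mul (fun _ => hX _)
    (fun _ => (hX _).const_mul _) b⁻¹).symm m t ht
  simpa only [mul_inv_cancel_left₀ ha.ne', inv_mul_cancel_left₀ hb] using h'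

theorem natCast_rpow {α β : ℝ} (hIDT : IsAlphaIDT P α X) (hstable : IsStrictlyStable P β X)
    {n : ℕ} (hn : 0 < n) : IsScalingPair P X ((n : ℝ) ^ (1 / α)) ((n : ℝ) ^ (1 / β)) :=
  (hIDT n hn).trans (hstable n hn)

theorem ratCast_rpow {α β : ℝ} (hX : ∀ t, Measurable (X t)) (hIDT : IsAlphaIDT P α X)
    (hstable : IsStrictlyStable P β X) {q : ℚ} (hq : 0 < q) :
    IsScalingPair P X ((q : ℝ) ^ (1 / α)) ((q : ℝ) ^ (1 / β)) := by
  obtain ⟨p, hp⟩ := Int.eq_ofNat_of_zero_le (Rat.num_nonneg.2 hq.le)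
  have hp_pos : 0 < p := by have := Rat.num_pos.2 hq; omega
  have hq_eq : (q : ℝ) = (p : ℝ) / (q.den : ℝ) := by
    rw [Rat.cast_def, hp]; push_cast; rfl
  have hden_pos : (0 : ℝ) < q.den := by exact_mod_cast q.den_pos
  have hden := natCast_rpow hIDT hstable q.den_pos
  rw [hq_eq, Real.div_rpow p.cast_nonneg hden_pos.le, Real.div_rpow p.cast_nonneg hden_pos.le,
    div_eq_mul_inv, div_eq_mul_inv]
  exact (natCast_rpow hIDT hstable hp_pos).mul hX
    (hden.inv hX (Real.rpow_pos_of_pos hden_pos _) (Real.rpow_pos_of_pos hden_pos _).ne')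
    (inv_nonneg.2 (Real.rpow_nonneg hden_pos.le _))

theorem of_tendsto [IsProbabilityMeasure P] (hX : ∀ t, Measurable (X t))
    (hcont : StochasticallyContinuous P X) {u v : ℕ → ℝ} (hu : Tendsto u atTop (𝓝 a))
    (hv : Tendsto v atTop (𝓝 b)) (hu_nonneg : ∀ k, 0 ≤ u k)
    (h : ∀ k, IsScalingPair P X (u k) (v k)) : IsScalingPair P X a b := by
  intro m t ht
  have ha : 0 ≤ a := ge_of_tendsto' hu hu_nonneg
  have htime : TendstoInMeasure P (fun k ω i => X (u k * t i) ω) atTop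
      (fun ω i => X (a * t i) ω) := by
    refine tendstoInMeasure_pi fun i => ?_
    have hti : Tendsto (fun k => u k * t i) atTop (𝓝[Set.Ici 0] (a * t i)) :=
      tendsto_nhdsWithin_iff.2
        ⟨hu.mul_const _, .of_forall fun k => mul_nonneg (hu_nonneg k) (ht i)⟩
    exact fun ε hε => (hcont (a * t i) (mul_nonneg ha (ht i)) ε hε).comp hti
  have hspace : TendstoInMeasure P (fun k ω i => v k * X (t i) ω) atTop
      (fun ω i => b * X (t i) ω) :=
    tendstoInMeasure_of_tendsto_ae
      (fun k => (measurable_pi_lambda _ fun i => (hX _).const_mul _).aestronglyMeasurable)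
      (ae_of_all _ fun ω => tendsto_pi_nhds.2 fun i => hv.mul_const _)
  exact map_eq_map_of_tendstoInMeasure
    (fun k => (measurable_pi_lambda _ fun i => hX _).aemeasurable)
    (fun k => (measurable_pi_lambda _ fun i => (hX _).const_mul _).aemeasurable)
    htime hspace fun k => h k m t ht

theorem rpow [IsProbabilityMeasure P] {α β : ℝ} (hX : ∀ t, Measurable (X t))
    (hcont : StochasticallyContinuous P X) (hIDT : IsAlphaIDT P α X)
    (hstable : IsStrictlyStable P β X) {x : ℝ} (hx : 0 < x) :
    IsScalingPair P X (x ^ (1 / α)) (x ^ (1 / β)) := by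
  obtain ⟨q, -, hq_gt, hq_lim⟩ :=
    Rat.denseRange_cast.exists_seq_strictAnti_tendsto Rat.cast_mono x
  have hq_pos (k : ℕ) : (0 : ℝ) < q k := hx.trans (hq_gt k)
  have hlim (γ : ℝ) : Tendsto (fun k => (q k : ℝ) ^ (1 / γ)) atTop (𝓝 (x ^ (1 / γ))) :=
    (Real.continuousAt_rpow_const _ _ (Or.inl hx.ne')).tendsto.comp hq_lim
  exact of_tendsto hX hcont (hlim α) (hlim β) (fun k => Real.rpow_nonneg (hq_pos k).le _)
    fun k => ratCast_rpow hX hIDT hstable (Rat.cast_pos.1 (hq_pos k))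

end IsScalingPair

theorem stmt12_general {Ω : Type*} [MeasurableSpace Ω] (P : Measure Ω) [IsProbabilityMeasure P]
    (α β : ℝ) (hα : 0 < α) (X : ℝ → Ω → ℝ) (hXmeas : ∀ t, Measurable (X t))
    (hcont : StochasticallyContinuous P X)
    (hIDT : IsAlphaIDT P α X)
    (hstable : IsStrictlyStable P β X) :
    IsSelfSimilar P (α / β) X := by
  intro a ha
  have h := IsScalingPair.rpow hXmeas hcont hIDT hstable (Real.rpow_pos_of_pos ha α)
  rwa [← Real.rpow_mul ha.le, ← Real.rpow_mul ha.le, mul_one_div_cancel hα.ne', Real.rpow_one,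
    mul_one_div] at h

/-- a non-trivial stochastically continuous `α`-IDT process which is strictly
`β`-stable is `(α/β)`-selfsimilar. -/
theorem stmt12 {Ω : Type*} [MeasurableSpace Ω] (P : Measure Ω) [IsProbabilityMeasure P]
    (α β : ℝ) (hα : 0 < α) (hβ : 0 < β) (X : ℝ → Ω → ℝ) (hXmeas : ∀ t, Measurable (X t))
    (hnt : IsNonTrivialProcess P X)
    (hcont : StochasticallyContinuous P X)
    (hIDT : IsAlphaIDT P α X)
    (hstable : IsStrictlyStable P β X) :
    IsSelfSimilar P (α / β) X :=
  stmt12_general P α β hα X hXmeas hcont hIDT hstable
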